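/- Let X ⊆ ℝⁿ be a polyhedral set and ψ(x) = max_{1≤i≤k₁} ψ₁ᵢ(x) − max_{1≤j≤k₂} ψ₂ⱼ(x), where every ψ₁ᵢ is an affine function and every ψ₂ⱼ is an (indefinite) quadratic function. Then the set ψ(D_{(ψ,X)}) of d-stationary values of ψ on X is finite. -/

import Mathlib

open Matrix Filter Topology

noncomputable def finMax {k : ℕ} (hk : 0 < k) (g : Fin k → ℝ) : ℝ :=
  Finset.univ.sup' (Finset.univ_nonempty_iff.mpr ⟨⟨0, hk⟩⟩) g

/-- The one-sided directional derivative of `ψ` at `x` in direction `v` equals `L`. -/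
def HasDirDeriv {n : ℕ} (ψ : (Fin n → ℝ) → ℝ) (x v : Fin n → ℝ) (L : ℝ) : Prop :=
  Filter.Tendsto (fun δ : ℝ => (ψ (x + δ • v) - ψ x) / δ) (nhdsWithin 0 (Set.Ioi 0)) (nhds L)

/-- `x₀` is a d(irectional)-stationary point of `ψ` on `X`. -/
def DStat {n : ℕ} (ψ : (Fin n → ℝ) → ℝ) (X : Set (Fin n → ℝ)) (x₀ : Fin n → ℝ) : Prop :=
  x₀ ∈ X ∧ ∀ x ∈ X, ∃ L, HasDirDeriv ψ x₀ (x - x₀) L ∧ 0 ≤ L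


/-- A polyhedral subset of ℝⁿ: solution set of finitely many linear inequalities. -/
def IsPolyhedral {n : ℕ} (X : Set (Fin n → ℝ)) : Prop :=
  ∃ (m : ℕ) (A : Fin m → Fin n → ℝ) (b : Fin m → ℝ), X = {x | ∀ i, A i ⬝ᵥ x ≤ b i}


/-!
Sort the d-stationary points `x` by the active index sets `I(x)` of the affine pieces, `J(x)`
of the quadratic pieces and `K(x)` of the constraints; there are finitely many classes, and `ψ`
is constant on each. Indeed `ψ'(x; v) = max_{i ∈ I(x)} aᵢ ⬝ v - max_{j ∈ J(x)} ∇ψ₂ⱼ(x) ⬝ v`.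
If `x` and `y` are stationary and in the same class, and `j ∈ J(x)`, testing stationarity at `x`
in the directions `y - x` and `x - y` (feasible for a short step because `K(x) = K(y)`) gives
`∇ψ₂ⱼ(x) ⬝ (y - x) = c`, where `c` is the increment of the affine max from `x` to `y`;
symmetrically `∇ψ₂ⱼ(y) ⬝ (y - x) = c`. So `ψ₂ⱼ` has no curvature along `y - x`, increases by
exactly `c` as well, and `ψ x = ψ y`.
-/

open Finset

section ActiveSet

variable {ι α : Type*} {s : Finset ι} {g : ι → ℝ}

noncomputable def activeSet (s : Finset ι) (g : ι → ℝ) : Finset ι :=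
  {j ∈ s | ∀ i ∈ s, g i ≤ g j}

theorem mem_activeSet {j : ι} : j ∈ activeSet s g ↔ j ∈ s ∧ ∀ i ∈ s, g i ≤ g j :=
  mem_filter

theorem activeSet_subset : activeSet s g ⊆ s :=
  filter_subset _ _

theorem activeSet_nonempty (hs : s.Nonempty) : (activeSet s g).Nonempty := by
  obtain ⟨j, hj, hmax⟩ := exists_max_image s g hs
  exact ⟨j, mem_activeSet.2 ⟨hj, hmax⟩⟩

theorem sup'_eq_of_mem_activeSet (hs : s.Nonempty) {j : ι} (hj : j ∈ activeSet s g) :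
    s.sup' hs g = g j :=
  le_antisymm (sup'_le _ _ (mem_activeSet.1 hj).2) (le_sup' g (mem_activeSet.1 hj).1)

theorem eventually_sup'_eq_sup'_activeSet (hs : s.Nonempty) {f : ι → α → ℝ} {l : Filter α}
    (hf : ∀ j ∈ s, Tendsto (f j) l (𝓝 (g j))) :
    ∀ᶠ t in l, s.sup' hs (f · t) = (activeSet s g).sup' (activeSet_nonempty hs) (f · t) := by
  obtain ⟨j₀, hj₀⟩ := activeSet_nonempty (g := g) hs
  have hlt : ∀ j ∈ s, j ∉ activeSet s g → g j < g j₀ := fun j hj hja => by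
    obtain ⟨i, hi, hji⟩ : ∃ i ∈ s, g j < g i := by simpa [mem_activeSet, hj] using hja
    exact hji.trans_le ((mem_activeSet.1 hj₀).2 i hi)
  have hev : ∀ᶠ t in l, ∀ j ∈ s, j ∉ activeSet s g → f j t < f j₀ t :=
    (eventually_all_finset s).2 fun j hj => by
      by_cases hja : j ∈ activeSet s g
      · exact .of_forall fun _ h => (h hja).elim
      · exact ((hf j hj).eventually_lt (hf j₀ (activeSet_subset hj₀)) (hlt j hj hja)).mono
          fun _ h _ => h
  filter_upwards [hev] with t ht
  refine le_antisymm (sup'_le _ _ fun j hj => ?_) (sup'_mono _ activeSet_subset _)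
  by_cases hja : j ∈ activeSet s g
  · exact le_sup' (f · t) hja
  · exact (ht j hj hja).le.trans (le_sup' (f · t) hj₀)

end ActiveSet

theorem finMax_eq_of_mem_activeSet {k : ℕ} (hk : 0 < k) {g : Fin k → ℝ} {j : Fin k}
    (hj : j ∈ activeSet univ g) : finMax hk g = g j :=
  sup'_eq_of_mem_activeSet _ hj

namespace HasDirDeriv

variable {n : ℕ} {φ χ : (Fin n → ℝ) → ℝ} {x v : Fin n → ℝ} {L M : ℝ}

theorem unique (h : HasDirDeriv φ x v L) (h' : HasDirDeriv φ x v M) : L = M :=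
  tendsto_nhds_unique h h'

theorem sub (h : HasDirDeriv φ x v L) (h' : HasDirDeriv χ x v M) :
    HasDirDeriv (fun y => φ y - χ y) x v (L - M) :=
  (Tendsto.sub h h').congr fun δ => by ring

theorem tendsto_apply (h : HasDirDeriv φ x v L) :
    Tendsto (fun δ : ℝ => φ (x + δ • v)) (𝓝[>] 0) (𝓝 (φ x)) := by
  have hδ : Tendsto (fun δ : ℝ => δ) (𝓝[>] 0) (𝓝 0) := nhdsWithin_le_nhds
  have := tendsto_const_nhds (x := φ x) |>.add (hδ.mul h)
  rw [zero_mul, add_zero] at this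
  refine this.congr' ?_
  filter_upwards [self_mem_nhdsWithin] with δ (hδ : 0 < δ)
  field_simp
  ring

theorem finset_sup' {ι : Type*} {s : Finset ι} (hs : s.Nonempty) {f : ι → (Fin n → ℝ) → ℝ}
    {f' : ι → ℝ} (hf : ∀ j ∈ s, HasDirDeriv (f j) x v (f' j)) :
    HasDirDeriv (fun y => s.sup' hs (f · y)) x v
      ((activeSet s (f · x)).sup' (activeSet_nonempty hs) f') := by
  set S := activeSet s (f · x)
  have hS : S.Nonempty := activeSet_nonempty hs
  have hlim : Tendsto (fun δ : ℝ => S.sup' hS fun j => (f j (x + δ • v) - f j x) / δ)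
      (𝓝[>] 0) (𝓝 (S.sup' hS f')) :=
    Tendsto.finset_sup'_nhds_apply hS fun j hj => hf j (activeSet_subset hj)
  refine hlim.congr' ?_
  filter_upwards [eventually_sup'_eq_sup'_activeSet hs fun j hj => (hf j hj).tendsto_apply,
    self_mem_nhdsWithin] with δ hmax (hδ : 0 < δ)
  set M := s.sup' hs (f · x)
  have hmono : Monotone fun t => (t - M) / δ := fun _ _ h =>
    div_le_div_of_nonneg_right (sub_le_sub_right h M) hδ.le
  rw [hmax, apply_sup'_eq_sup'_comp hS (fun t => (t - M) / δ) hmono.map_sup]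
  exact sup'_congr hS rfl fun j hj => by rw [← sup'_eq_of_mem_activeSet hs hj]; rfl

end HasDirDeriv

section Affine

variable {n : ℕ}

theorem hasDirDeriv_dotProduct_add_const (a : Fin n → ℝ) (c : ℝ) (x v : Fin n → ℝ) :
    HasDirDeriv (fun y => a ⬝ᵥ y + c) x v (a ⬝ᵥ v) := by
  refine tendsto_const_nhds.congr' ?_
  filter_upwards [self_mem_nhdsWithin] with δ (hδ : 0 < δ)
  simp only [dotProduct_add, dotProduct_smul, smul_eq_mul]
  field_simp
  ring

theorem exists_pos_add_smul_mem_polyhedron {m : ℕ} {A : Fin m → Fin n → ℝ} {b : Fin m → ℝ}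
    {x : Fin n → ℝ} (hx : ∀ i, A i ⬝ᵥ x ≤ b i) {v : Fin n → ℝ}
    (hv : ∀ i, A i ⬝ᵥ x = b i → A i ⬝ᵥ v ≤ 0) :
    ∃ ε : ℝ, 0 < ε ∧ ∀ i, A i ⬝ᵥ (x + ε • v) ≤ b i := by
  have hev : ∀ᶠ ε in 𝓝[>] (0 : ℝ), ∀ i, A i ⬝ᵥ x + ε * A i ⬝ᵥ v ≤ b i := by
    refine eventually_all.2 fun i => ?_
    by_cases hAv : A i ⬝ᵥ v ≤ 0
    · filter_upwards [self_mem_nhdsWithin] with ε (hε : 0 < ε)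
      nlinarith [hx i]
    · have hlt : A i ⬝ᵥ x < b i := (hx i).lt_of_ne fun h => hAv (hv i h)
      have hcont : Continuous fun ε : ℝ => A i ⬝ᵥ x + ε * A i ⬝ᵥ v := by fun_prop
      refine nhdsWithin_le_nhds (hcont.tendsto' 0 _ (by simp) |>.eventually_le_const hlt)
  obtain ⟨ε, hε, hεpos⟩ := (hev.and self_mem_nhdsWithin).exists
  exact ⟨ε, hεpos, by simpa [dotProduct_add, dotProduct_smul] using hε⟩

end Affine

section Quadratic

variable {n : ℕ} {Q : Matrix (Fin n) (Fin n) ℝ} {q : Fin n → ℝ} {c : ℝ}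
  {φ : (Fin n → ℝ) → ℝ}

theorem quadratic_add_eq (hQ : Q.IsSymm) (hφ : ∀ x, φ x = (1/2) * (x ⬝ᵥ Q *ᵥ x) + q ⬝ᵥ x + c)
    (x w : Fin n → ℝ) :
    φ (x + w) = φ x + (Q *ᵥ x + q) ⬝ᵥ w + (1/2) * (w ⬝ᵥ Q *ᵥ w) := by
  have hsymm : x ⬝ᵥ Q *ᵥ w = w ⬝ᵥ Q *ᵥ x := by
    rw [dotProduct_mulVec, ← mulVec_transpose, hQ.eq, dotProduct_comm]
  simp only [hφ, mulVec_add, dotProduct_add, add_dotProduct]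
  rw [hsymm, dotProduct_comm w]
  ring

theorem hasDirDeriv_quadratic (hQ : Q.IsSymm)
    (hφ : ∀ x, φ x = (1/2) * (x ⬝ᵥ Q *ᵥ x) + q ⬝ᵥ x + c) (x v : Fin n → ℝ) :
    HasDirDeriv φ x v ((Q *ᵥ x + q) ⬝ᵥ v) := by
  have hcont : Continuous fun δ : ℝ => (Q *ᵥ x + q) ⬝ᵥ v + δ * ((1/2) * (v ⬝ᵥ Q *ᵥ v)) := by
    fun_prop
  refine ((hcont.tendsto' 0 _ (by simp)).mono_left nhdsWithin_le_nhds).congr' ?_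
  filter_upwards [self_mem_nhdsWithin] with δ (hδ : 0 < δ)
  simp only [quadratic_add_eq hQ hφ, mulVec_smul, dotProduct_smul, smul_dotProduct, smul_eq_mul]
  field_simp
  ring

end Quadratic

section DCFunction

variable {n k₁ k₂ : ℕ} {hk₁ : 0 < k₁} {hk₂ : 0 < k₂} {a : Fin k₁ → Fin n → ℝ} {α : Fin k₁ → ℝ}
  {Q₂ : Fin k₂ → Matrix (Fin n) (Fin n) ℝ} {q₂ : Fin k₂ → Fin n → ℝ} {α₂ : Fin k₂ → ℝ}
  {ψ₂ : Fin k₂ → (Fin n → ℝ) → ℝ} {ψ : (Fin n → ℝ) → ℝ}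

theorem exists_activeSet_le_of_dStat (hQ₂ : ∀ j, (Q₂ j).IsSymm)
    (hψ₂ : ∀ j x, ψ₂ j x = (1/2) * (x ⬝ᵥ (Q₂ j).mulVec x) + q₂ j ⬝ᵥ x + α₂ j)
    (hψ : ∀ x, ψ x = finMax hk₁ (fun i => a i ⬝ᵥ x + α i) - finMax hk₂ (fun j => ψ₂ j x))
    {X : Set (Fin n → ℝ)} {x z : Fin n → ℝ} (hx : DStat ψ X x) (hz : z ∈ X)
    {j : Fin k₂} (hj : j ∈ activeSet univ fun j => ψ₂ j x) :
    ∃ i ∈ activeSet univ (fun i => a i ⬝ᵥ x + α i),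
      (Q₂ j *ᵥ x + q₂ j) ⬝ᵥ (z - x) ≤ a i ⬝ᵥ (z - x) := by
  set v := z - x
  have hne₁ : (univ : Finset (Fin k₁)).Nonempty := univ_nonempty_iff.2 ⟨⟨0, hk₁⟩⟩
  have hne₂ : (univ : Finset (Fin k₂)).Nonempty := univ_nonempty_iff.2 ⟨⟨0, hk₂⟩⟩
  have hderiv : HasDirDeriv ψ x v
      ((activeSet univ fun i => a i ⬝ᵥ x + α i).sup' (activeSet_nonempty hne₁) (a · ⬝ᵥ v) -
        (activeSet univ fun j => ψ₂ j x).sup' (activeSet_nonempty hne₂)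
          fun j => (Q₂ j *ᵥ x + q₂ j) ⬝ᵥ v) := by
    obtain rfl : ψ = _ := funext hψ
    exact (HasDirDeriv.finset_sup' hne₁ fun i _ => hasDirDeriv_dotProduct_add_const _ _ x v).sub
      (HasDirDeriv.finset_sup' hne₂ fun j _ => hasDirDeriv_quadratic (hQ₂ j) (hψ₂ j) x v)
  obtain ⟨L, hL, hL0⟩ := hx.2 z hz
  obtain ⟨i, hi, hmax⟩ := exists_mem_eq_sup' (activeSet_nonempty hne₁) (a · ⬝ᵥ v)
  have hgrad := le_sup' (fun j => (Q₂ j *ᵥ x + q₂ j) ⬝ᵥ v) hj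
  rw [hL.unique hderiv] at hL0
  exact ⟨i, hi, by linarith⟩

theorem gradient_dotProduct_sub_eq (hQ₂ : ∀ j, (Q₂ j).IsSymm)
    (hψ₂ : ∀ j x, ψ₂ j x = (1/2) * (x ⬝ᵥ (Q₂ j).mulVec x) + q₂ j ⬝ᵥ x + α₂ j)
    (hψ : ∀ x, ψ x = finMax hk₁ (fun i => a i ⬝ᵥ x + α i) - finMax hk₂ (fun j => ψ₂ j x))
    {m : ℕ} {A : Fin m → Fin n → ℝ} {b : Fin m → ℝ} {x y : Fin n → ℝ}
    (hx : DStat ψ {x | ∀ i, A i ⬝ᵥ x ≤ b i} x) (hy : ∀ i, A i ⬝ᵥ y ≤ b i)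
    (hI : (activeSet univ fun i => a i ⬝ᵥ x + α i) ⊆ activeSet univ fun i => a i ⬝ᵥ y + α i)
    (hK : {i | A i ⬝ᵥ x = b i} ⊆ {i | A i ⬝ᵥ y = b i})
    {j : Fin k₂} (hj : j ∈ activeSet univ fun j => ψ₂ j x) :
    (Q₂ j *ᵥ x + q₂ j) ⬝ᵥ (y - x) =
      finMax hk₁ (fun i => a i ⬝ᵥ y + α i) - finMax hk₁ (fun i => a i ⬝ᵥ x + α i) := by
  set c := finMax hk₁ (fun i => a i ⬝ᵥ y + α i) - finMax hk₁ (fun i => a i ⬝ᵥ x + α i)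
  have hconst : ∀ i ∈ activeSet univ (fun i => a i ⬝ᵥ x + α i), a i ⬝ᵥ (y - x) = c := by
    intro i hi
    simp only [c, dotProduct_sub, finMax_eq_of_mem_activeSet hk₁ hi,
      finMax_eq_of_mem_activeSet hk₁ (hI hi)]
    ring
  have hle : (Q₂ j *ᵥ x + q₂ j) ⬝ᵥ (y - x) ≤ c := by
    obtain ⟨i, hi, h⟩ := exists_activeSet_le_of_dStat hQ₂ hψ₂ hψ hx hy hj
    exact h.trans_eq (hconst i hi)
  obtain ⟨ε, hε, hz⟩ := exists_pos_add_smul_mem_polyhedron hx.1 (v := x - y) fun i hi => by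
    rw [dotProduct_sub, hi, (hK hi : A i ⬝ᵥ y = b i), sub_self]
  obtain ⟨i, hi, h⟩ := exists_activeSet_le_of_dStat hQ₂ hψ₂ hψ hx hz hj
  have hzx : x + ε • (x - y) - x = (-ε) • (y - x) := by module
  rw [hzx, dotProduct_smul, dotProduct_smul, hconst i hi, smul_eq_mul, smul_eq_mul] at h
  exact le_antisymm hle (le_of_neg_le_neg (le_of_mul_le_mul_left (by linarith) hε))

theorem eq_of_dStat_of_activeSet_eq (hQ₂ : ∀ j, (Q₂ j).IsSymm)
    (hψ₂ : ∀ j x, ψ₂ j x = (1/2) * (x ⬝ᵥ (Q₂ j).mulVec x) + q₂ j ⬝ᵥ x + α₂ j)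
    (hψ : ∀ x, ψ x = finMax hk₁ (fun i => a i ⬝ᵥ x + α i) - finMax hk₂ (fun j => ψ₂ j x))
    {m : ℕ} {A : Fin m → Fin n → ℝ} {b : Fin m → ℝ} {x y : Fin n → ℝ}
    (hx : DStat ψ {x | ∀ i, A i ⬝ᵥ x ≤ b i} x) (hy : DStat ψ {x | ∀ i, A i ⬝ᵥ x ≤ b i} y)
    (hI : (activeSet univ fun i => a i ⬝ᵥ x + α i) = activeSet univ fun i => a i ⬝ᵥ y + α i)
    (hJ : (activeSet univ fun j => ψ₂ j x) = activeSet univ fun j => ψ₂ j y)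
    (hK : {i | A i ⬝ᵥ x = b i} = {i | A i ⬝ᵥ y = b i}) :
    ψ x = ψ y := by
  have hne₂ : (univ : Finset (Fin k₂)).Nonempty := univ_nonempty_iff.2 ⟨⟨0, hk₂⟩⟩
  obtain ⟨j, hjx⟩ := activeSet_nonempty (g := fun j => ψ₂ j x) hne₂
  have hjy : j ∈ activeSet univ fun j => ψ₂ j y := hJ ▸ hjx
  have hxy := gradient_dotProduct_sub_eq hQ₂ hψ₂ hψ hx hy.1 hI.subset hK.subset hjx
  have hyx := gradient_dotProduct_sub_eq hQ₂ hψ₂ hψ hy hx.1 hI.symm.subset hK.symm.subset hjy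
  have hcurv : (y - x) ⬝ᵥ Q₂ j *ᵥ (y - x) = 0 := by
    rw [dotProduct_comm, mulVec_sub]
    simp only [sub_dotProduct, add_dotProduct, dotProduct_sub] at hxy hyx ⊢
    linarith
  have hexp := quadratic_add_eq (hQ₂ j) (hψ₂ j) x (y - x)
  rw [add_sub_cancel, hcurv, hxy] at hexp
  rw [hψ, hψ, finMax_eq_of_mem_activeSet hk₂ hjx, finMax_eq_of_mem_activeSet hk₂ hjy]
  linarith

end DCFunction

theorem Set.Finite.image_of_factors {α β γ : Type*} [Finite γ] {f : α → β} {s : Set α}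
    (key : α → γ) (h : ∀ x ∈ s, ∀ y ∈ s, key x = key y → f x = f y) : (f '' s).Finite := by
  have hcover : f '' s ⊆ ⋃ c, f '' {x ∈ s | key x = c} := by
    rintro _ ⟨x, hx, rfl⟩
    exact Set.mem_iUnion.2 ⟨key x, x, ⟨hx, rfl⟩, rfl⟩
  refine (Set.finite_iUnion fun c => Set.Subsingleton.finite ?_).subset hcover
  rintro _ ⟨x, ⟨hx, rfl⟩, rfl⟩ _ ⟨y, ⟨hy, hyx⟩, rfl⟩
  exact h x hx y hy hyx.symm

/-- Corollary 5(a): for `ψ = max_i ψ₁ᵢ - max_j ψ₂ⱼ` with each `ψ₁ᵢ` affine and each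
`ψ₂ⱼ` (indefinite) quadratic, the set of d-stationary values of `ψ` on a polyhedral
set `X` is finite. -/
theorem stmt_6 {n k₁ k₂ : ℕ} (hk₁ : 0 < k₁) (hk₂ : 0 < k₂)
    (X : Set (Fin n → ℝ)) (hX : IsPolyhedral X)
    (a : Fin k₁ → Fin n → ℝ) (α : Fin k₁ → ℝ)
    (Q₂ : Fin k₂ → Matrix (Fin n) (Fin n) ℝ) (q₂ : Fin k₂ → Fin n → ℝ) (α₂ : Fin k₂ → ℝ)
    (hQ₂ : ∀ j, (Q₂ j).IsSymm)
    (ψ₂ : Fin k₂ → (Fin n → ℝ) → ℝ)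
    (hψ₂ : ∀ j x, ψ₂ j x = (1/2) * (x ⬝ᵥ (Q₂ j).mulVec x) + q₂ j ⬝ᵥ x + α₂ j)
    (ψ : (Fin n → ℝ) → ℝ)
    (hψ : ∀ x, ψ x = finMax hk₁ (fun i => a i ⬝ᵥ x + α i) - finMax hk₂ (fun j => ψ₂ j x)) :
    (ψ '' {x | DStat ψ X x}).Finite := by
  obtain ⟨m, A, b, rfl⟩ := hX
  refine Set.Finite.image_of_factors (fun x => ((activeSet univ fun i => a i ⬝ᵥ x + α i),
    (activeSet univ fun j => ψ₂ j x), {i | A i ⬝ᵥ x = b i})) fun x hx y hy hxy => ?_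
  simp only [Prod.mk.injEq] at hxy
  exact eq_of_dStat_of_activeSet_eq hQ₂ hψ₂ hψ hx hy hxy.1 hxy.2.1 hxy.2.2
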